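/- arXiv:2405.14775 — 4 statements merged into one kernel-verified Lean document; each statement's English description precedes it below -/
import Mathlib

section
/- The parameterized shift map S(z,τ)(t) = z(t-τ), viewed as a map from H¹_{[0]}(-b,T;ℝⁿ) × [0,b] to L²(0,T;ℝⁿ), is continuously Fréchet differentiable, with derivative (DS(z,τ)(h,δ))(t) = h(t-τ) - ż(t-τ)·δ. -/
open MeasureTheory Real

/-- The `H¹(-b,T)` norm of a function `h` with weak derivative `h'`. -/
noncomputable def H1Norm (n : ℕ) (b T : ℝ) (h h' : ℝ → EuclideanSpace ℝ (Fin n)) : ℝ :=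
  Real.sqrt (((eLpNorm h 2 (volume.restrict (Set.Ioo (-b) T))).toReal) ^ 2 +
    ((eLpNorm h' 2 (volume.restrict (Set.Ioo (-b) T))).toReal) ^ 2)

/-- `h` belongs to `H¹_{[0]}(-b,T)` with weak derivative `h'`: `h` is the primitive of
the square-integrable function `h'`, which vanishes on `(-∞,0]` (so `h = 0` on `[-b,0]`). -/
def MemH1Null (n : ℕ) (b T : ℝ) (h h' : ℝ → EuclideanSpace ℝ (Fin n)) : Prop :=
  (∀ t, h t = ∫ s in (0:ℝ)..t, h' s) ∧ MemLp h' 2 volume ∧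
    (∀ t, t ≤ 0 → h' t = 0) ∧ (∀ t, T ≤ t → h' t = 0)

open Set Filter Topology Function
open scoped ENNReal Interval

/-!
Put `u = t - τ`. Since `z` and `h` are primitives of `ż` and `ḣ`, the remainder of the
linearization is `∫_0^{-δ} (ż(u + r) - ż(u)) dr + ∫_u^{u-δ} ḣ`, and the difference of the
derivatives at `(z, τ)` and `(y, σ)` is
`-∫_u^{u+c} ḣ + δ (ż(u + c) - ż(u)) - δ (ż - ẏ)(u + c)` with `c = τ - σ`.
By Cauchy–Schwarz in `r` and Tonelli, `‖t ↦ ∫_0^c K(t, r) dr‖₂ ≤ |c| sup_r ‖K(·, r)‖₂`; together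
with the continuity of translation on `L²(ℝ)`, i.e. `sup_{|r| ≤ |c|} ‖ż(· + r) - ż‖₂ → 0`, this
bounds every term.
-/

theorem sq_lintegral_le_measure_univ_mul {α : Type*} [MeasurableSpace α] {μ : Measure α}
    {g : α → ℝ≥0∞} (hg : AEMeasurable g μ) : (∫⁻ x, g x ∂μ) ^ 2 ≤ μ univ * ∫⁻ x, g x ^ 2 ∂μ := by
  have h := ENNReal.lintegral_mul_le_Lp_mul_Lq μ Real.HolderConjugate.two_two hg
    (aemeasurable_const (b := 1))
  simp only [Pi.mul_apply, mul_one, ENNReal.one_rpow, lintegral_const, one_mul] at h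
  calc (∫⁻ x, g x ∂μ) ^ 2
      ≤ ((∫⁻ x, g x ^ (2:ℝ) ∂μ) ^ (1/2 : ℝ) * μ univ ^ (1/2 : ℝ)) ^ 2 := by gcongr
    _ = μ univ * ∫⁻ x, g x ^ 2 ∂μ := by
      rw [mul_pow, ← ENNReal.rpow_natCast, ← ENNReal.rpow_natCast (μ univ ^ _), ← ENNReal.rpow_mul,
        ← ENNReal.rpow_mul]
      norm_num [mul_comm]

section

variable {E : Type*} [NormedAddCommGroup E]

theorem MeasureTheory.MemLp.tendsto_eLpNorm_comp_add_sub {p : ℝ≥0∞} [Fact (1 ≤ p)]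
    {f : ℝ → E} (hf : MemLp f p volume) (hp : p ≠ ∞) :
    Tendsto (fun r => eLpNorm (fun t => f (t + r) - f t) p volume) (𝓝 0) (𝓝 0) := by
  -- translation by `r` is the action of `DomAddAct.mk r`, and that action on `Lp` is continuous
  have : Fact (p ≠ ∞) := ⟨hp⟩
  obtain ⟨F, hF⟩ : ∃ F : Lp E p volume, F =ᵐ[volume] f := ⟨_, hf.coeFn_toLp⟩
  have hcont : Tendsto (fun r : ℝ => DomAddAct.mk r +ᵥ F) (𝓝 0) (𝓝 F) := by
    have := ((continuous_vadd.comp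
      (DomAddAct.continuous_mk.prodMk continuous_const)).tendsto (0 : ℝ) :
        Tendsto (fun r : ℝ => DomAddAct.mk r +ᵥ F) _ _)
    rwa [Function.comp_apply, DomAddAct.mk_zero, zero_vadd] at this
  have hdist : ∀ r : ℝ, eLpNorm (fun t => f (t + r) - f t) p volume =
      edist (DomAddAct.mk r +ᵥ F) F := by
    intro r
    rw [Lp.edist_def]
    refine eLpNorm_congr_ae ?_
    filter_upwards [DomAddAct.vadd_Lp_ae_eq (DomAddAct.mk r) F,
      (measurePreserving_add_right volume r).quasiMeasurePreserving.ae_eq_comp hF,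
      hF] with t h1 hr ht
    simp only [Function.comp_apply] at hr
    rw [Pi.sub_apply, h1, ht, Equiv.symm_apply_apply, vadd_eq_add, add_comm r t, hr]
  simp_rw [hdist]
  exact tendsto_iff_edist_tendsto_0.mp hcont

theorem aestronglyMeasurable_comp_add_prod {f : ℝ → E} (hf : AEStronglyMeasurable f volume)
    (s : Set ℝ) : AEStronglyMeasurable (fun p : ℝ × ℝ => f (p.1 + p.2))
      (volume.prod (volume.restrict s)) :=
  (hf.comp_quasiMeasurePreserving (quasiMeasurePreserving_add volume volume)).mono_measure
    (Measure.prod_mono le_rfl Measure.restrict_le_self)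

theorem eLpNorm_restrict_comp_sub_le {f : ℝ → E} (hf : AEStronglyMeasurable f volume)
    (p : ℝ≥0∞) (s : Set ℝ) (τ : ℝ) :
    eLpNorm (fun t => f (t - τ)) p (volume.restrict s) ≤ eLpNorm f p volume :=
  (eLpNorm_restrict_le _ _ _ _).trans
    (eLpNorm_comp_measurePreserving hf (measurePreserving_sub_right volume τ)).le

theorem eLpNorm_two_sq {α : Type*} [MeasurableSpace α] (μ : Measure α) (f : α → E) :
    eLpNorm f 2 μ ^ 2 = ∫⁻ x, ‖f x‖ₑ ^ 2 ∂μ := by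
  simpa using eLpNorm_nnreal_pow_eq_lintegral (f := f) (μ := μ) (p := 2) two_ne_zero

theorem MeasureTheory.LocallyIntegrable.intervalIntegrable {f : ℝ → E}
    (hf : LocallyIntegrable f volume) (a b : ℝ) : IntervalIntegrable f volume a b :=
  (hf.integrableOn_isCompact isCompact_uIcc).intervalIntegrable

variable [NormedSpace ℝ E]

theorem enorm_intervalIntegral_sq_le {F : ℝ → E} {a b : ℝ}
    (hF : AEStronglyMeasurable F (volume.restrict (Ι a b))) :
    ‖∫ r in a..b, F r‖ₑ ^ 2 ≤ ENNReal.ofReal |b - a| * ∫⁻ r in Ι a b, ‖F r‖ₑ ^ 2 := by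
  calc ‖∫ r in a..b, F r‖ₑ ^ 2 ≤ (∫⁻ r in Ι a b, ‖F r‖ₑ) ^ 2 := by
        gcongr
        rw [← enorm_norm, intervalIntegral.norm_integral_eq_norm_integral_uIoc, enorm_norm]
        exact enorm_integral_le_lintegral_enorm _
    _ ≤ _ := by
        simpa [Real.volume_uIoc] using sq_lintegral_le_measure_univ_mul hF.enorm

theorem eLpNorm_intervalIntegral_le {α : Type*} [MeasurableSpace α] {μ : Measure α} [SFinite μ]
    {K : α → ℝ → E} {a b : ℝ}
    (hK : AEStronglyMeasurable (uncurry K) (μ.prod (volume.restrict (Ι a b))))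
    {C : ℝ≥0∞} (hC : ∀ r ∈ Ι a b, eLpNorm (K · r) 2 μ ≤ C) :
    eLpNorm (fun t => ∫ r in a..b, K t r) 2 μ ≤ ENNReal.ofReal |b - a| * C := by
  set L := ENNReal.ofReal |b - a|
  rw [← ENNReal.pow_le_pow_left_iff two_ne_zero, eLpNorm_two_sq]
  calc ∫⁻ t, ‖∫ r in a..b, K t r‖ₑ ^ 2 ∂μ
      ≤ ∫⁻ t, L * (∫⁻ r in Ι a b, ‖K t r‖ₑ ^ 2) ∂μ := by
        refine lintegral_mono_ae ?_
        filter_upwards [hK.prodMk_left] with t ht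
        exact enorm_intervalIntegral_sq_le ht
    _ = L * ∫⁻ r in Ι a b, (∫⁻ t, ‖K t r‖ₑ ^ 2 ∂μ) := by
        rw [lintegral_const_mul' _ _ ENNReal.ofReal_ne_top,
          lintegral_lintegral_swap (hK.enorm.pow_const 2)]
    _ ≤ L * ∫⁻ r in Ι a b, C ^ 2 := by
        have hr : ∀ r ∈ Ι a b, ∫⁻ t, ‖K t r‖ₑ ^ 2 ∂μ ≤ C ^ 2 := fun r hr => by
          rw [← eLpNorm_two_sq]
          gcongr
          exact hC r hr
        exact mul_le_mul_right (setLIntegral_mono' measurableSet_uIoc hr) L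
    _ = (L * C) ^ 2 := by
        rw [setLIntegral_const, Real.volume_uIoc]
        ring

theorem continuous_intervalIntegral_add_const {f : ℝ → E} (hf : LocallyIntegrable f volume)
    (c : ℝ) : Continuous fun t => ∫ u in t..t + c, f u := by
  have hF := intervalIntegral.continuous_primitive hf.intervalIntegrable 0
  have heq : (fun t => ∫ u in t..t + c, f u) =
      fun t => (∫ u in 0..t + c, f u) - ∫ u in 0..t, f u := by
    ext t
    rw [intervalIntegral.integral_interval_sub_left (hf.intervalIntegrable 0 _)
      (hf.intervalIntegrable 0 _)]
  rw [heq]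
  exact (hF.comp (continuous_add_const c)).sub hF

theorem intervalIntegral_eq_integral_comp_add (f : ℝ → E) (t c : ℝ) :
    ∫ u in t..t + c, f u = ∫ r in 0..c, f (t + r) := by
  simp [intervalIntegral.integral_comp_add_left]

theorem eLpNorm_intervalIntegral_comp_add_le {f : ℝ → E} (hf : AEStronglyMeasurable f volume)
    (c : ℝ) : eLpNorm (fun t => ∫ u in t..t + c, f u) 2 volume
      ≤ ENNReal.ofReal |c| * eLpNorm f 2 volume := by
  simp_rw [intervalIntegral_eq_integral_comp_add]
  have h := eLpNorm_intervalIntegral_le (a := 0) (b := c) (K := fun t r => f (t + r))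
    (aestronglyMeasurable_comp_add_prod hf _) fun r _ =>
      (eLpNorm_comp_measurePreserving hf (measurePreserving_add_right volume r)).le
  rwa [sub_zero] at h

theorem MeasureTheory.MemLp.eventually_eLpNorm_intervalIntegral_sub_smul_le [CompleteSpace E]
    {f : ℝ → E} (hf : MemLp f 2 volume) {ε : ℝ≥0∞} (hε : 0 < ε) :
    ∀ᶠ c in 𝓝 0, eLpNorm (fun t => (∫ u in t..t + c, f u) - c • f t) 2 volume
      ≤ ENNReal.ofReal |c| * ε := by
  obtain ⟨η, hη, hsmall⟩ := Metric.eventually_nhds_iff.mp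
    (ENNReal.tendsto_nhds_zero.mp (hf.tendsto_eLpNorm_comp_add_sub ENNReal.ofNat_ne_top) ε hε)
  filter_upwards [Metric.ball_mem_nhds 0 hη] with c hc
  have hdiff : ∀ t, (∫ u in t..t + c, f u) - c • f t = ∫ r in 0..c, (f (t + r) - f t) := by
    intro t
    have hint : IntervalIntegrable (fun r => f (t + r)) volume 0 c :=
      ((hf.comp_measurePreserving (measurePreserving_add_left volume t)).locallyIntegrable
        one_le_two).intervalIntegrable 0 c
    rw [intervalIntegral.integral_sub hint intervalIntegrable_const,
      intervalIntegral.integral_const, sub_zero, intervalIntegral_eq_integral_comp_add]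
  have hK : AEStronglyMeasurable (fun p : ℝ × ℝ => f (p.1 + p.2) - f p.1)
      (volume.prod (volume.restrict (Ι 0 c))) :=
    (aestronglyMeasurable_comp_add_prod hf.1 _).sub hf.1.comp_fst
  have h := eLpNorm_intervalIntegral_le (K := fun t r => f (t + r) - f t) hK fun r hr => hsmall ?_
  · simp_rw [hdiff]
    rwa [sub_zero] at h
  · rw [Metric.mem_ball, Real.dist_eq] at hc
    rw [Real.dist_eq]
    exact (Set.abs_sub_left_of_mem_uIcc (uIoc_subset_uIcc hr)).trans_lt hc

end

section H1

variable {n : ℕ} {b T : ℝ} {h h' : ℝ → EuclideanSpace ℝ (Fin n)}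

theorem MemH1Null.sub_eq_intervalIntegral (hh : MemH1Null n b T h h') (x y : ℝ) :
    h y - h x = ∫ s in x..y, h' s := by
  have hloc := hh.2.1.locallyIntegrable one_le_two
  rw [hh.1 x, hh.1 y, intervalIntegral.integral_interval_sub_left (hloc.intervalIntegrable _ _)
    (hloc.intervalIntegrable _ _)]

theorem MemH1Null.sub {y y' : ℝ → EuclideanSpace ℝ (Fin n)} (hh : MemH1Null n b T h h')
    (hy : MemH1Null n b T y y') : MemH1Null n b T (h - y) (h' - y') := by
  obtain ⟨hprim, hL2, hzero, hend⟩ := hh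
  obtain ⟨hprim', hL2', hzero', hend'⟩ := hy
  refine ⟨fun t => ?_, hL2.sub hL2', fun t ht => ?_, fun t ht => ?_⟩
  · rw [Pi.sub_apply, hprim, hprim', ← intervalIntegral.integral_sub
      ((hL2.locallyIntegrable one_le_two).intervalIntegrable _ _)
      ((hL2'.locallyIntegrable one_le_two).intervalIntegrable _ _)]
    rfl
  · simp [hzero t ht, hzero' t ht]
  · simp [hend t ht, hend' t ht]

theorem MemH1Null.eLpNorm_deriv_le_H1Norm (hb : 0 ≤ b) (hh : MemH1Null n b T h h') :
    eLpNorm h' 2 volume ≤ ENNReal.ofReal (H1Norm n b T h h') := by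
  have hsupp : support h' ⊆ Ioo (-b) T := fun t ht => by
    by_contra hout
    rcases not_and_or.mp hout with h0 | hT
    · exact ht (hh.2.2.1 t (by linarith [not_lt.mp h0]))
    · exact ht (hh.2.2.2 t (not_lt.mp hT))
  rw [← eLpNorm_restrict_eq_of_support_subset hsupp, ← ENNReal.ofReal_toReal
    (hh.2.1.restrict _).eLpNorm_ne_top]
  refine ENNReal.ofReal_le_ofReal (Real.le_sqrt_of_sq_le ?_)
  linarith [sq_nonneg (eLpNorm h 2 (volume.restrict (Ioo (-b) T))).toReal]

theorem MemH1Null.eLpNorm_shift_remainder_le {z z' : ℝ → EuclideanSpace ℝ (Fin n)}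
    (hz : MemH1Null n b T z z') (hh : MemH1Null n b T h h') (τ δ : ℝ) (s : Set ℝ) :
    eLpNorm (fun t => (z (t - τ - δ) + h (t - τ - δ)) - z (t - τ)
        - (h (t - τ) - δ • z' (t - τ))) 2 (volume.restrict s)
      ≤ eLpNorm (fun u => (∫ v in u..u + -δ, z' v) - (-δ) • z' u) 2 volume
        + ENNReal.ofReal |δ| * eLpNorm h' 2 volume := by
  set A := fun u => (∫ v in u..u + -δ, z' v) - (-δ) • z' u
  set B := fun u => ∫ v in u..u + -δ, h' v
  have hA : AEStronglyMeasurable A volume :=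
    (continuous_intervalIntegral_add_const (hz.2.1.locallyIntegrable one_le_two)
      _).aestronglyMeasurable.sub (hz.2.1.1.fun_const_smul _)
  have hB : AEStronglyMeasurable B volume :=
    (continuous_intervalIntegral_add_const (hh.2.1.locallyIntegrable one_le_two)
      _).aestronglyMeasurable
  have hR : (fun t => (z (t - τ - δ) + h (t - τ - δ)) - z (t - τ) - (h (t - τ) - δ • z' (t - τ)))
      = fun t => (A + B) (t - τ) := by
    ext1 t
    simp only [A, B, Pi.add_apply, ← hz.sub_eq_intervalIntegral, ← hh.sub_eq_intervalIntegral,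
      ← sub_eq_add_neg, neg_smul, sub_neg_eq_add]
    abel
  calc _ = eLpNorm (fun t => (A + B) (t - τ)) 2 (volume.restrict s) := by rw [hR]
    _ ≤ eLpNorm (A + B) 2 volume := eLpNorm_restrict_comp_sub_le (hA.add hB) _ _ _
    _ ≤ eLpNorm A 2 volume + eLpNorm B 2 volume := eLpNorm_add_le hA hB one_le_two
    _ ≤ _ := by
      gcongr
      simpa using eLpNorm_intervalIntegral_comp_add_le hh.2.1.1 (-δ)

theorem MemH1Null.eLpNorm_shift_deriv_sub_le {z' y' : ℝ → EuclideanSpace ℝ (Fin n)}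
    (hz' : AEStronglyMeasurable z' volume) (hy' : AEStronglyMeasurable y' volume)
    (hh : MemH1Null n b T h h') (τ σ δ : ℝ) (s : Set ℝ) :
    eLpNorm (fun t => (h (t - τ) - δ • z' (t - τ)) - (h (t - σ) - δ • y' (t - σ))) 2
        (volume.restrict s)
      ≤ ENNReal.ofReal |τ - σ| * eLpNorm h' 2 volume
        + ENNReal.ofReal |δ| * eLpNorm (fun u => z' (u + (τ - σ)) - z' u) 2 volume
        + ENNReal.ofReal |δ| * eLpNorm (z' - y') 2 volume := by
  set c := τ - σ
  set B := fun u => -∫ v in u..u + c, h' v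
  set D := fun u => δ • (z' (u + c) - z' u)
  set Y := fun u => δ • (z' - y') (u + c)
  have hzc : AEStronglyMeasurable (fun u => z' (u + c)) volume :=
    hz'.comp_measurePreserving (measurePreserving_add_right volume c)
  have hB : AEStronglyMeasurable B volume :=
    (continuous_intervalIntegral_add_const (hh.2.1.locallyIntegrable one_le_two)
      _).neg.aestronglyMeasurable
  have hD : AEStronglyMeasurable D volume := (hzc.sub hz').fun_const_smul δ
  have hY : AEStronglyMeasurable Y volume :=
    ((hz'.sub hy').comp_measurePreserving (measurePreserving_add_right volume c)).fun_const_smul δ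
  have hR : (fun t => (h (t - τ) - δ • z' (t - τ)) - (h (t - σ) - δ • y' (t - σ)))
      = fun t => (B + D - Y) (t - τ) := by
    ext1 t
    have hσ : t - σ = t - τ + c := by ring
    simp only [B, D, Y, Pi.add_apply, Pi.sub_apply, hσ, ← hh.sub_eq_intervalIntegral, smul_sub]
    abel
  calc _ = eLpNorm (fun t => (B + D - Y) (t - τ)) 2 (volume.restrict s) := by rw [hR]
    _ ≤ eLpNorm (B + D - Y) 2 volume := eLpNorm_restrict_comp_sub_le ((hB.add hD).sub hY) _ _ _
    _ ≤ eLpNorm B 2 volume + eLpNorm D 2 volume + eLpNorm Y 2 volume :=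
      (eLpNorm_sub_le (hB.add hD) hY one_le_two).trans
        (add_le_add_left (eLpNorm_add_le hB hD one_le_two) _)
    _ ≤ _ := by
      gcongr ?_ + ?_ + ?_
      · rw [show B = -fun u => ∫ v in u..u + c, h' v from rfl, eLpNorm_neg]
        exact eLpNorm_intervalIntegral_comp_add_le hh.2.1.1 c
      · rw [show D = δ • fun u => z' (u + c) - z' u from rfl, eLpNorm_const_smul,
          Real.enorm_eq_ofReal_abs]
      · rw [show Y = δ • fun u => (z' - y') (u + c) from rfl, eLpNorm_const_smul,
          Real.enorm_eq_ofReal_abs]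
        exact mul_le_mul_right (eLpNorm_comp_measurePreserving (hz'.sub hy')
          (measurePreserving_add_right volume c)).le _

theorem MemH1Null.exists_shift_remainder_le {z z' : ℝ → EuclideanSpace ℝ (Fin n)} (hb : 0 ≤ b)
    (hz : MemH1Null n b T z z') (τ : ℝ) (s : Set ℝ) {ε : ℝ} (hε : 0 < ε) :
    ∃ η > 0, ∀ h h' δ, MemH1Null n b T h h' → H1Norm n b T h h' + |δ| ≤ η →
      (eLpNorm (fun t => (z (t - τ - δ) + h (t - τ - δ)) - z (t - τ)
          - (h (t - τ) - δ • z' (t - τ))) 2 (volume.restrict s)).toReal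
        ≤ ε * (H1Norm n b T h h' + |δ|) := by
  obtain ⟨η, hη, hrem⟩ := Metric.eventually_nhds_iff.mp
    (hz.2.1.eventually_eLpNorm_intervalIntegral_sub_smul_le (ENNReal.ofReal_pos.mpr (half_pos hε)))
  refine ⟨min (η / 2) (ε / 2), by positivity, fun h h' δ hh hsmall => ?_⟩
  have hH : 0 ≤ H1Norm n b T h h' := Real.sqrt_nonneg _
  have hδ : |δ| ≤ min (η / 2) (ε / 2) := by linarith
  have hδη : dist (-δ) 0 < η := by
    rw [Real.dist_eq, sub_zero, abs_neg]
    linarith [min_le_left (η / 2) (ε / 2)]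
  refine ENNReal.toReal_le_of_le_ofReal (by positivity) ?_
  calc _ ≤ ENNReal.ofReal |δ| * ENNReal.ofReal (ε / 2)
        + ENNReal.ofReal |δ| * ENNReal.ofReal (H1Norm n b T h h') := by
        refine (hz.eLpNorm_shift_remainder_le hh τ δ _).trans ?_
        gcongr
        · simpa [abs_neg] using hrem hδη
        · exact hh.eLpNorm_deriv_le_H1Norm hb
    _ = ENNReal.ofReal (|δ| * (ε / 2) + |δ| * H1Norm n b T h h') := by
        rw [ENNReal.ofReal_add (by positivity) (by positivity), ENNReal.ofReal_mul (abs_nonneg _),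
          ENNReal.ofReal_mul (abs_nonneg _)]
    _ ≤ ENNReal.ofReal (ε * (H1Norm n b T h h' + |δ|)) := by
        gcongr
        nlinarith [min_le_right (η / 2) (ε / 2), abs_nonneg δ]

theorem MemH1Null.exists_shift_deriv_sub_le {z z' : ℝ → EuclideanSpace ℝ (Fin n)} (hb : 0 ≤ b)
    (hz : MemH1Null n b T z z') (τ : ℝ) (s : Set ℝ) {ε : ℝ} (hε : 0 < ε) :
    ∃ η > 0, ∀ y y' σ, MemH1Null n b T y y' → H1Norm n b T (z - y) (z' - y') + |τ - σ| ≤ η →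
      ∀ h h' δ, MemH1Null n b T h h' → H1Norm n b T h h' + |δ| ≤ 1 →
      (eLpNorm (fun t => (h (t - τ) - δ • z' (t - τ)) - (h (t - σ) - δ • y' (t - σ))) 2
        (volume.restrict s)).toReal ≤ ε := by
  obtain ⟨η, hη, htrans⟩ := Metric.eventually_nhds_iff.mp
    (ENNReal.tendsto_nhds_zero.mp (hz.2.1.tendsto_eLpNorm_comp_add_sub ENNReal.ofNat_ne_top) _
      (ENNReal.ofReal_pos.mpr (div_pos hε three_pos)))
  refine ⟨min (η / 2) (ε / 3), by positivity, fun y y' σ hy hclose h h' δ hh hsmall => ?_⟩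
  have hH : 0 ≤ H1Norm n b T h h' := Real.sqrt_nonneg _
  have hHzy : 0 ≤ H1Norm n b T (z - y) (z' - y') := Real.sqrt_nonneg _
  have hτσ : |τ - σ| ≤ min (η / 2) (ε / 3) := by linarith
  have hτση : dist (τ - σ) 0 < η := by
    rw [Real.dist_eq, sub_zero]
    linarith [min_le_left (η / 2) (ε / 3)]
  refine ENNReal.toReal_le_of_le_ofReal hε.le ?_
  calc _ ≤ ENNReal.ofReal |τ - σ| * ENNReal.ofReal (H1Norm n b T h h')
        + ENNReal.ofReal |δ| * ENNReal.ofReal (ε / 3)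
        + ENNReal.ofReal |δ| * ENNReal.ofReal (H1Norm n b T (z - y) (z' - y')) := by
        refine (hh.eLpNorm_shift_deriv_sub_le hz.2.1.1 hy.2.1.1 τ σ δ _).trans ?_
        gcongr
        · exact hh.eLpNorm_deriv_le_H1Norm hb
        · exact htrans hτση
        · exact (hz.sub hy).eLpNorm_deriv_le_H1Norm hb
    _ = ENNReal.ofReal (|τ - σ| * H1Norm n b T h h' + |δ| * (ε / 3)
          + |δ| * H1Norm n b T (z - y) (z' - y')) := by
        rw [ENNReal.ofReal_add (by positivity) (by positivity),
          ENNReal.ofReal_add (by positivity) (by positivity), ENNReal.ofReal_mul (abs_nonneg _),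
          ENNReal.ofReal_mul (abs_nonneg _), ENNReal.ofReal_mul (abs_nonneg _)]
    _ ≤ ENNReal.ofReal ε := by
        gcongr
        nlinarith [min_le_right (η / 2) (ε / 3), abs_nonneg δ, abs_nonneg (τ - σ)]

end H1

theorem shift_map_C1_general (n : ℕ) (b T : ℝ) (hb : 0 < b)
    (z z' : ℝ → EuclideanSpace ℝ (Fin n)) (hz : MemH1Null n b T z z')
    (τ : ℝ) :
    (∀ ε > (0:ℝ), ∃ η > (0:ℝ), ∀ h h' δ, MemH1Null n b T h h' →
      τ + δ ∈ Set.Icc (0:ℝ) b → H1Norm n b T h h' + |δ| ≤ η →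
      (eLpNorm (fun t => (z (t - τ - δ) + h (t - τ - δ)) - z (t - τ)
          - (h (t - τ) - δ • z' (t - τ))) 2
        (volume.restrict (Set.Ioo 0 T))).toReal ≤ ε * (H1Norm n b T h h' + |δ|)) ∧
    (∀ ε > (0:ℝ), ∃ η > (0:ℝ), ∀ y y' σ, MemH1Null n b T y y' → σ ∈ Set.Icc (0:ℝ) b →
      H1Norm n b T (z - y) (z' - y') + |τ - σ| ≤ η →
      ∀ h h' δ, MemH1Null n b T h h' → H1Norm n b T h h' + |δ| ≤ 1 →
      (eLpNorm (fun t => (h (t - τ) - δ • z' (t - τ)) - (h (t - σ) - δ • y' (t - σ))) 2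
        (volume.restrict (Set.Ioo 0 T))).toReal ≤ ε) := by
  refine ⟨fun ε hε => ?_, fun ε hε => ?_⟩
  · obtain ⟨η, hη, hrem⟩ := hz.exists_shift_remainder_le hb.le τ (Ioo 0 T) hε
    exact ⟨η, hη, fun h h' δ hh _ => hrem h h' δ hh⟩
  · obtain ⟨η, hη, hderiv⟩ := hz.exists_shift_deriv_sub_le hb.le τ (Ioo 0 T) hε
    exact ⟨η, hη, fun y y' σ hy _ => hderiv y y' σ hy⟩

/-- the parameterized shift map `S(z,τ)(t) = z(t-τ)` is continuously
Fréchet differentiable from `H¹_{[0]}(-b,T;ℝⁿ) × [0,b]` to `L²(0,T;ℝⁿ)`, with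
derivative `(DS(z,τ)(h,δ))(t) = h(t-τ) - ż(t-τ) δ`.  The first clause expresses
Fréchet differentiability at `(z,τ)` (the remainder is `o(‖h‖_{H¹}+|δ|)`), the second
clause expresses continuity of the derivative in `(z,τ)` (in the operator norm). -/
theorem shift_map_C1 (n : ℕ) (b T : ℝ) (hb : 0 < b) (hT : 0 < T)
    (z z' : ℝ → EuclideanSpace ℝ (Fin n)) (hz : MemH1Null n b T z z')
    (τ : ℝ) (hτ : τ ∈ Set.Icc 0 b) :
    (∀ ε > (0:ℝ), ∃ η > (0:ℝ), ∀ h h' δ, MemH1Null n b T h h' →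
      τ + δ ∈ Set.Icc (0:ℝ) b → H1Norm n b T h h' + |δ| ≤ η →
      (eLpNorm (fun t => (z (t - τ - δ) + h (t - τ - δ)) - z (t - τ)
          - (h (t - τ) - δ • z' (t - τ))) 2
        (volume.restrict (Set.Ioo 0 T))).toReal ≤ ε * (H1Norm n b T h h' + |δ|)) ∧
    (∀ ε > (0:ℝ), ∃ η > (0:ℝ), ∀ y y' σ, MemH1Null n b T y y' → σ ∈ Set.Icc (0:ℝ) b →
      H1Norm n b T (z - y) (z' - y') + |τ - σ| ≤ η →
      ∀ h h' δ, MemH1Null n b T h h' → H1Norm n b T h h' + |δ| ≤ 1 →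
      (eLpNorm (fun t => (h (t - τ) - δ • z' (t - τ)) - (h (t - σ) - δ • y' (t - σ))) 2
        (volume.restrict (Set.Ioo 0 T))).toReal ≤ ε) :=
  shift_map_C1_general n b T hb z z' hz τ
end

section
/- For z ∈ H¹_{[0]}(-b,T;ℝⁿ), τ ∈ [0,b], and δ with τ + δ ∈ [0,b], the remainder R_h(h,δ)(t) = δ ∫₀¹ ḣ(t-τ-sδ) ds satisfies ‖R_h‖_{L²(0,T;ℝⁿ)} ≤ |δ| · ‖h‖_{H¹(-b,T;ℝⁿ)} for all h ∈ H¹_{[0]}(-b,T;ℝⁿ). -/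
open MeasureTheory Real
open scoped ENNReal

/-!
`R_h(h,δ) / δ` is the average of the translates `ḣ(· - τ - sδ)` over `s ∈ (0,1]`. By Jensen's
inequality and Tonelli, averaging translates against any probability measure does not increase
an `Lᵖ` norm for a translation-invariant measure, since every translate has the same norm.
As `ḣ` vanishes outside `(-b,T)`, its `L²(ℝ)` norm is its `L²(-b,T)` norm, which is at most
`‖h‖_{H¹(-b,T)}`.
-/

theorem enorm_integral_rpow_le_lintegral_enorm_rpow {α E : Type*} [MeasurableSpace α]
    [NormedAddCommGroup E] [NormedSpace ℝ E] {ν : Measure α} [IsProbabilityMeasure ν]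
    {g : α → E} (hg : AEStronglyMeasurable g ν) {q : ℝ} (hq : 1 ≤ q) :
    ‖∫ s, g s ∂ν‖ₑ ^ q ≤ ∫⁻ s, ‖g s‖ₑ ^ q ∂ν := by
  have hq0 : 0 < q := by linarith
  have h1 : ‖∫ s, g s ∂ν‖ₑ ≤ eLpNorm g 1 ν :=
    (enorm_integral_le_lintegral_enorm g).trans_eq eLpNorm_one_eq_lintegral_enorm.symm
  have h2 : eLpNorm g 1 ν ≤ eLpNorm g (ENNReal.ofReal q) ν :=
    eLpNorm_le_eLpNorm_of_exponent_le (by simpa using ENNReal.ofReal_le_ofReal hq) hg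
  rw [eLpNorm_eq_lintegral_rpow_enorm_toReal (by simpa using hq0) ENNReal.ofReal_ne_top,
    ENNReal.toReal_ofReal hq0.le] at h2
  calc ‖∫ s, g s ∂ν‖ₑ ^ q ≤ ((∫⁻ s, ‖g s‖ₑ ^ q ∂ν) ^ (1 / q)) ^ q :=
        ENNReal.rpow_le_rpow (h1.trans h2) hq0.le
    _ = ∫⁻ s, ‖g s‖ₑ ^ q ∂ν := by
        rw [← ENNReal.rpow_mul, one_div_mul_cancel hq0.ne', ENNReal.rpow_one]

section Translates

variable {G α E : Type*} [MeasurableSpace G] [AddGroup G] [MeasurableAdd₂ G] [MeasurableNeg G]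
  [MeasurableSpace α] [NormedAddCommGroup E] [NormedSpace ℝ E]
  {μ : Measure G} [SFinite μ] [μ.IsAddRightInvariant] {ν : Measure α} [IsProbabilityMeasure ν]
  {a : α → G}

/-- For a fixed `t` the map `s ↦ t - a s` need not be quasi-measure-preserving (take `a`
constant), so the representatives are exchanged on the product, where `(t, s) ↦ t - a s` is. -/
theorem ae_integral_comp_sub_congr {f g : G → E} (hfg : f =ᵐ[μ] g) (ha : Measurable a) :
    ∀ᵐ t ∂μ, ∫ s, f (t - a s) ∂ν = ∫ s, g (t - a s) ∂ν := by
  have hshift : Measure.QuasiMeasurePreserving (fun p : G × α => p.1 - a p.2) (μ.prod ν) μ :=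
    (quasiMeasurePreserving_sub_of_right_invariant μ (ν.map a)).comp
      ((MeasurePreserving.id μ).prod ⟨ha, rfl⟩).quasiMeasurePreserving
  filter_upwards [Measure.ae_ae_of_ae_prod (hshift.ae_eq_comp hfg)] with t ht
  exact integral_congr_ae ht

theorem lintegral_enorm_integral_comp_sub_rpow_le {g : G → E} (hg : StronglyMeasurable g)
    (ha : Measurable a) {q : ℝ} (hq : 1 ≤ q) :
    ∫⁻ t, ‖∫ s, g (t - a s) ∂ν‖ₑ ^ q ∂μ ≤ ∫⁻ t, ‖g t‖ₑ ^ q ∂μ := by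
  have hmeas : Measurable fun p : G × α => ‖g (p.1 - a p.2)‖ₑ ^ q :=
    (hg.comp_measurable (by fun_prop)).enorm.pow_const q
  calc ∫⁻ t, ‖∫ s, g (t - a s) ∂ν‖ₑ ^ q ∂μ ≤ ∫⁻ t, ∫⁻ s, ‖g (t - a s)‖ₑ ^ q ∂ν ∂μ :=
        lintegral_mono fun t => enorm_integral_rpow_le_lintegral_enorm_rpow
          (hg.comp_measurable (by fun_prop)).aestronglyMeasurable hq
    _ = ∫⁻ s, ∫⁻ t, ‖g (t - a s)‖ₑ ^ q ∂μ ∂ν := lintegral_lintegral_swap hmeas.aemeasurable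
    _ = ∫⁻ t, ‖g t‖ₑ ^ q ∂μ := by
        simp_rw [lintegral_sub_right_eq_self (fun t => ‖g t‖ₑ ^ q)]
        simp

theorem eLpNorm_integral_comp_sub_le {f : G → E} (hf : AEStronglyMeasurable f μ)
    (ha : Measurable a) {p : ℝ≥0∞} (hp : 1 ≤ p) (hp_top : p ≠ ⊤) :
    eLpNorm (fun t => ∫ s, f (t - a s) ∂ν) p μ ≤ eLpNorm f p μ := by
  have hp0 : p ≠ 0 := (zero_lt_one.trans_le hp).ne'
  rw [eLpNorm_congr_ae (ae_integral_comp_sub_congr (ν := ν) hf.ae_eq_mk ha),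
    eLpNorm_congr_ae hf.ae_eq_mk, eLpNorm_eq_lintegral_rpow_enorm_toReal hp0 hp_top,
    eLpNorm_eq_lintegral_rpow_enorm_toReal hp0 hp_top]
  have hq : 1 ≤ p.toReal := by simpa using ENNReal.toReal_mono hp_top hp
  exact ENNReal.rpow_le_rpow
    (lintegral_enorm_integral_comp_sub_rpow_le hf.stronglyMeasurable_mk ha hq) (by positivity)

end Translates

theorem toReal_eLpNorm_deriv_le_H1Norm {n : ℕ} {b T : ℝ} {h h' : ℝ → EuclideanSpace ℝ (Fin n)} :
    (eLpNorm h' 2 (volume.restrict (Set.Ioo (-b) T))).toReal ≤ H1Norm n b T h h' :=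
  (Real.le_sqrt (by positivity) (by positivity)).mpr (le_add_of_nonneg_left (sq_nonneg _))

theorem remainder_Rh_estimate_general (n : ℕ) (b T : ℝ) (hb : 0 < b)
    (τ δ : ℝ)
    (h h' : ℝ → EuclideanSpace ℝ (Fin n))
    (hL2 : MemLp h' 2 volume)
    (hzero : ∀ t, t ≤ 0 → h' t = 0) (hzeroT : ∀ t, T ≤ t → h' t = 0) :
    (eLpNorm (fun t => δ • ∫ s in (0:ℝ)..1, h' (t - τ - s * δ)) 2
        (volume.restrict (Set.Ioo 0 T))).toReal ≤ |δ| * H1Norm n b T h h' := by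
  have hsupp : Function.support h' ⊆ Set.Ioo (-b) T := fun t ht => by
    by_contra hout
    rcases not_and_or.mp hout with hlt | hgt
    · exact ht (hzero t (by linarith [not_lt.mp hlt]))
    · exact ht (hzeroT t (not_lt.mp hgt))
  have : IsProbabilityMeasure (volume.restrict (Set.Ioc (0:ℝ) 1)) := ⟨by simp⟩
  have hR : (fun t => δ • ∫ s in (0:ℝ)..1, h' (t - τ - s * δ))
      = δ • fun t => ∫ s in Set.Ioc (0:ℝ) 1, h' (t - (τ + s * δ)) := by
    ext1 t
    simp only [intervalIntegral.integral_of_le zero_le_one, sub_sub, Pi.smul_apply]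
  have hbound : eLpNorm (fun t => δ • ∫ s in (0:ℝ)..1, h' (t - τ - s * δ)) 2
      (volume.restrict (Set.Ioo 0 T)) ≤ ‖δ‖ₑ * eLpNorm h' 2 (volume.restrict (Set.Ioo (-b) T)) :=
    calc _ ≤ eLpNorm (fun t => δ • ∫ s in (0:ℝ)..1, h' (t - τ - s * δ)) 2 volume :=
          eLpNorm_mono_measure _ Measure.restrict_le_self
      _ ≤ ‖δ‖ₑ * eLpNorm h' 2 volume := by
          rw [hR, eLpNorm_const_smul]
          gcongr
          exact eLpNorm_integral_comp_sub_le hL2.1 (by fun_prop) one_le_two ENNReal.ofNat_ne_top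
      _ = ‖δ‖ₑ * eLpNorm h' 2 (volume.restrict (Set.Ioo (-b) T)) := by
          rw [eLpNorm_restrict_eq_of_support_subset hsupp]
  calc _ ≤ (‖δ‖ₑ * eLpNorm h' 2 (volume.restrict (Set.Ioo (-b) T))).toReal :=
        ENNReal.toReal_mono (ENNReal.mul_ne_top enorm_ne_top (hL2.restrict _).eLpNorm_ne_top) hbound
    _ ≤ |δ| * H1Norm n b T h h' := by
        rw [ENNReal.toReal_mul, toReal_enorm, Real.norm_eq_abs]
        gcongr
        exact toReal_eLpNorm_deriv_le_H1Norm

/-- the remainder `R_h(h,δ)(t) = δ ∫₀¹ ḣ(t-τ-sδ) ds` satisfies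
`‖R_h‖_{L²(0,T)} ≤ |δ| ‖h‖_{H¹(-b,T)}` for `h ∈ H¹_{[0]}(-b,T;ℝⁿ)`. -/
theorem remainder_Rh_estimate (n : ℕ) (b T : ℝ) (hb : 0 < b) (hT : 0 < T)
    (τ δ : ℝ) (hτ : τ ∈ Set.Icc 0 b) (hτδ : τ + δ ∈ Set.Icc (0:ℝ) b)
    (h h' : ℝ → EuclideanSpace ℝ (Fin n))
    (hprim : ∀ t, h t = ∫ s in (0:ℝ)..t, h' s)
    (hL2 : MemLp h' 2 volume)
    (hzero : ∀ t, t ≤ 0 → h' t = 0) (hzeroT : ∀ t, T ≤ t → h' t = 0) :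
    (eLpNorm (fun t => δ • ∫ s in (0:ℝ)..1, h' (t - τ - s * δ)) 2
        (volume.restrict (Set.Ioo 0 T))).toReal ≤ |δ| * H1Norm n b T h h' :=
  remainder_Rh_estimate_general n b T hb τ δ h h' hL2 hzero hzeroT
end

section
/- Let φ ∈ H²(-b,0;ℝⁿ), x[τ] ∈ H²(0,T;ℝⁿ) with x[τ](0) = φ(0), and suppose τ ↦ x'[τ] is continuous with values in H¹(0,T;ℝⁿ). Define ψ(τ,t) = φ(t-τ) for t ∈ [0,τ] and ψ(τ,t) = x[τ](t-τ) for t ∈ (τ,T]. Then the difference quotient (ψ(τ+δ,·) - ψ(τ,·))/δ converges in L²(0,T;ℝⁿ) as δ → 0, and the limit equals -φ̇(t-τ) on [0,τ] and x'[τ](t-τ) - ẋ[τ](t-τ) on (τ,T]. -/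
/-! Off the diagonal `t = τ` the difference quotient converges pointwise: for `t < τ` only the
history `φ` is involved, while for `t > τ` the quotient splits into a `σ`-difference of `X` taken
at the moving time `t - τ - δ`, controlled by the mean value inequality and the joint continuity
of `W = ∂_σ X`, plus a backward time difference of `X τ`. The quotients are uniformly bounded
because `σ ↦ X σ s` is Lipschitz and the history `φ` glued to `X σ` at `0` is Lipschitz (the two
pieces agree there). Dominated convergence on the bounded interval `(0, T)` upgrades this to
convergence in `L²`. -/

open MeasureTheory Set Filter Topology
open scoped ENNReal

theorem tendsto_eLpNorm_zero_of_tendsto_ae_of_norm_le {ι α E : Type*} [MeasurableSpace α]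
    {μ : Measure α} [IsFiniteMeasure μ] [NormedAddCommGroup E] {l : Filter ι}
    [l.IsCountablyGenerated] {F : ι → α → E} {C : ℝ} {p : ℝ≥0∞} (hp : p ≠ ∞)
    (hF : ∀ᶠ i in l, AEStronglyMeasurable (F i) μ) (hC : ∀ᶠ i in l, ∀ᵐ a ∂μ, ‖F i a‖ ≤ C)
    (hlim : ∀ᵐ a ∂μ, Tendsto (fun i => F i a) l (𝓝 0)) :
    Tendsto (fun i => eLpNorm (F i) p μ) l (𝓝 0) := by
  rcases eq_or_ne p 0 with rfl | hp0
  · simpa using tendsto_const_nhds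
  have hp_pos : 0 < p.toReal := ENNReal.toReal_pos hp0 hp
  have hrpow : ∀ q : ℝ, 0 < q → Tendsto (fun x : ℝ≥0∞ => x ^ q) (𝓝 0) (𝓝 0) := fun q hq => by
    simpa [ENNReal.zero_rpow_of_pos hq] using (ENNReal.continuous_rpow_const (y := q)).tendsto 0
  have hint : Tendsto (fun i => ∫⁻ a, ‖F i a‖ₑ ^ p.toReal ∂μ) l (𝓝 0) := by
    simpa using tendsto_lintegral_filter_of_dominated_convergence'
        (fun _ => ENNReal.ofReal C ^ p.toReal) (hF.mono fun i hi => hi.enorm.pow_const _)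
        (hC.mono fun i hi => hi.mono fun a ha => ENNReal.rpow_le_rpow
          (ofReal_norm (F i a) ▸ ENNReal.ofReal_le_ofReal ha) hp_pos.le)
        (by simpa using ENNReal.mul_ne_top (ENNReal.rpow_ne_top_of_nonneg hp_pos.le
          ENNReal.ofReal_ne_top) (measure_ne_top μ univ))
        (hlim.mono fun a ha => hrpow _ hp_pos |>.comp (by simpa using ha.enorm))
  simp_rw [eLpNorm_eq_lintegral_rpow_enorm_toReal hp0 hp]
  exact (hrpow _ (one_div_pos.2 hp_pos)).comp hint

theorem HasDerivAt.tendsto_backward_slope_zero {E : Type*} [NormedAddCommGroup E]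
    [NormedSpace ℝ E] {f : ℝ → E} {f' : E} {x : ℝ} (h : HasDerivAt f f' x) :
    Tendsto (fun δ : ℝ => δ⁻¹ • (f (x - δ) - f x)) (𝓝[≠] 0) (𝓝 (-f')) := by
  have hg : HasDerivAt (fun δ => f (x - δ)) (-f') 0 :=
    HasDerivAt.comp_const_sub x 0 (by simpa using h)
  simpa using hg.tendsto_slope_zero

theorem tendsto_slope_fst_of_continuousWithinAt {E : Type*} [NormedAddCommGroup E]
    [NormedSpace ℝ E] {X W : ℝ → ℝ → E} {I K : Set ℝ} (hI : Convex ℝ I)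
    (hX : ∀ σ ∈ I, ∀ u ∈ K, HasDerivWithinAt (fun ρ => X ρ u) (W σ u) I σ) {τ s : ℝ}
    (hτ : τ ∈ I) (hW : ContinuousWithinAt (fun p : ℝ × ℝ => W p.1 p.2) (I ×ˢ K) (τ, s)) :
    Tendsto (fun p : ℝ × ℝ => (p.1 - τ)⁻¹ • (X p.1 p.2 - X τ p.2))
      (𝓝[(I \ {τ}) ×ˢ K] (τ, s)) (𝓝 (W τ s)) := by
  rw [Metric.tendsto_nhds]
  intro ε hε
  obtain ⟨r, hr, hWr⟩ := Metric.continuousWithinAt_iff.1 hW (ε / 2) (half_pos hε)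
  filter_upwards [mem_nhdsWithin_of_mem_nhds (Metric.ball_mem_nhds _ hr), self_mem_nhdsWithin]
    with ⟨σ, u⟩ hdist ⟨⟨hσ, hστ⟩, hu⟩
  have hseg : uIcc τ σ ⊆ I := hI.ordConnected.uIcc_subset hτ hσ
  -- mean value inequality for `ρ ↦ X ρ u - ρ • W τ s`, whose derivative is small near `(τ, s)`
  have hmvt : ‖(X σ u - σ • W τ s) - (X τ u - τ • W τ s)‖ ≤ ε / 2 * ‖σ - τ‖ := by
    refine (convex_uIcc τ σ).norm_image_sub_le_of_norm_hasDerivWithin_le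
      (f := fun ρ => X ρ u - ρ • W τ s) (f' := fun ρ => W ρ u - W τ s) (fun ρ hρ => ?_)
      (fun ρ hρ => ?_) left_mem_uIcc right_mem_uIcc
    · have := ((hX ρ (hseg hρ) u hu).mono hseg).sub
        ((hasDerivWithinAt_id ρ _).smul_const (W τ s))
      rwa [one_smul] at this
    · have hρr : dist (ρ, u) (τ, s) < r := by
        refine lt_of_le_of_lt ?_ hdist
        simp only [Prod.dist_eq, Real.dist_eq]
        exact max_le_max (abs_sub_left_of_mem_uIcc hρ) le_rfl
      rw [← dist_eq_norm]
      exact (hWr (x := (ρ, u)) ⟨hseg hρ, hu⟩ hρr).le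
  have hne : σ - τ ≠ 0 := sub_ne_zero.2 hστ
  have hsplit : (σ - τ)⁻¹ • (X σ u - X τ u) - W τ s
      = (σ - τ)⁻¹ • ((X σ u - σ • W τ s) - (X τ u - τ • W τ s)) := by
    rw [show (X σ u - σ • W τ s) - (X τ u - τ • W τ s) = (X σ u - X τ u) - (σ - τ) • W τ s by
      rw [sub_smul]; abel, smul_sub _ (X σ u - X τ u), smul_smul, inv_mul_cancel₀ hne, one_smul]
  calc dist ((σ - τ)⁻¹ • (X σ u - X τ u)) (W τ s)
      = ‖σ - τ‖⁻¹ * ‖(X σ u - σ • W τ s) - (X τ u - τ • W τ s)‖ := by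
        rw [dist_eq_norm, hsplit, norm_smul, norm_inv]
    _ ≤ ‖σ - τ‖⁻¹ * (ε / 2 * ‖σ - τ‖) := by gcongr
    _ = ε / 2 := by field_simp [norm_ne_zero_iff.2 hne]
    _ < ε := half_lt_self hε

theorem tendsto_slope_shift_of_continuousWithinAt {E : Type*} [NormedAddCommGroup E]
    [NormedSpace ℝ E] {X W : ℝ → ℝ → E} {x' : E} {I K : Set ℝ}
    (hI : Convex ℝ I) (hX : ∀ σ ∈ I, ∀ u ∈ K, HasDerivWithinAt (fun ρ => X ρ u) (W σ u) I σ)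
    {τ s : ℝ} (hτ : τ ∈ I) (hK : K ∈ 𝓝 s)
    (hW : ContinuousWithinAt (fun p : ℝ × ℝ => W p.1 p.2) (I ×ˢ K) (τ, s))
    (hXs : HasDerivAt (X τ) x' s) :
    Tendsto (fun δ : ℝ => δ⁻¹ • (X (τ + δ) (s - δ) - X τ s))
      (𝓝[{δ | τ + δ ∈ I} \ {0}] 0) (𝓝 (W τ s - x')) := by
  have hpath : Tendsto (fun δ : ℝ => (τ + δ, s - δ)) (𝓝[{δ | τ + δ ∈ I} \ {0}] 0)
      (𝓝[(I \ {τ}) ×ˢ K] (τ, s)) := by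
    have hcont : Tendsto (fun δ : ℝ => (τ + δ, s - δ)) (𝓝 0) (𝓝 (τ, s)) := by
      simpa using ((continuous_const_add τ).prodMk (continuous_sub_left s)).tendsto 0
    refine tendsto_nhdsWithin_iff.2 ⟨hcont.mono_left nhdsWithin_le_nhds, ?_⟩
    filter_upwards [self_mem_nhdsWithin,
      nhdsWithin_le_nhds ((hcont.eventually (prod_mem_nhds univ_mem hK)))] with δ ⟨hδI, hδ⟩ hδK
    exact ⟨⟨hδI, by simpa using hδ⟩, hδK.2⟩
  have hparam := (tendsto_slope_fst_of_continuousWithinAt hI hX hτ hW).comp hpath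
  have htime := hXs.tendsto_backward_slope_zero.mono_left
    (nhdsWithin_mono 0 (sdiff_subset_compl {δ | τ + δ ∈ I} {0}))
  convert hparam.add htime using 1
  · funext δ
    simp only [Function.comp_apply, add_sub_cancel_left, ← smul_add, sub_add_sub_cancel]
  · rw [sub_eq_add_neg]

section ExtendByHistory

variable {E : Type*}

/-- The trajectory `x` preceded by the history `φ` on `(-∞, 0]`; the paper's `ψ(σ, t)` is
`extendByHistory φ (X σ) (t - σ)`. -/
noncomputable def extendByHistory (φ x : ℝ → E) (s : ℝ) : E := if s ≤ 0 then φ s else x s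

theorem extendByHistory_of_nonpos {φ x : ℝ → E} {s : ℝ} (hs : s ≤ 0) :
    extendByHistory φ x s = φ s :=
  if_pos hs

theorem extendByHistory_of_pos {φ x : ℝ → E} {s : ℝ} (hs : 0 < s) :
    extendByHistory φ x s = x s :=
  if_neg hs.not_ge

theorem extendByHistory_eq_add [AddCommGroup E] {φ x : ℝ → E} (h0 : φ 0 = x 0) (s : ℝ) :
    extendByHistory φ x s = φ (min s 0) + (x (max s 0) - x 0) := by
  rcases le_or_gt s 0 with hs | hs
  · simp [extendByHistory, hs]
  · rw [extendByHistory_of_pos hs, min_eq_right hs.le, max_eq_left hs.le, h0, add_sub_cancel]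

variable [NormedAddCommGroup E]

theorem norm_extendByHistory_sub_le {φ x : ℝ → E} {a c Cφ Cx : ℝ} (ha : a ≤ 0) (hc : 0 ≤ c)
    (hCφ : 0 ≤ Cφ) (hCx : 0 ≤ Cx)
    (hφ : ∀ s ∈ Icc a 0, ∀ s' ∈ Icc a 0, ‖φ s - φ s'‖ ≤ Cφ * ‖s - s'‖)
    (hx : ∀ s ∈ Icc 0 c, ∀ s' ∈ Icc 0 c, ‖x s - x s'‖ ≤ Cx * ‖s - s'‖) (h0 : φ 0 = x 0)
    {s s' : ℝ} (hs : s ∈ Icc a c) (hs' : s' ∈ Icc a c) :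
    ‖extendByHistory φ x s - extendByHistory φ x s'‖ ≤ (Cφ + Cx) * ‖s - s'‖ := by
  have hmin : ∀ r ∈ Icc a c, min r 0 ∈ Icc a 0 := fun r hr => ⟨le_min hr.1 ha, min_le_right _ _⟩
  have hmax : ∀ r ∈ Icc a c, max r 0 ∈ Icc 0 c := fun r hr => ⟨le_max_right _ _, max_le hr.2 hc⟩
  have hdmin : ‖min s 0 - min s' 0‖ ≤ ‖s - s'‖ := by
    simpa [Real.norm_eq_abs] using abs_min_sub_min_le_max s 0 s' 0
  have hdmax : ‖max s 0 - max s' 0‖ ≤ ‖s - s'‖ := by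
    simpa [Real.norm_eq_abs] using abs_max_sub_max_le_abs s s' 0
  rw [extendByHistory_eq_add h0, extendByHistory_eq_add h0]
  calc ‖φ (min s 0) + (x (max s 0) - x 0) - (φ (min s' 0) + (x (max s' 0) - x 0))‖
      = ‖(φ (min s 0) - φ (min s' 0)) + (x (max s 0) - x (max s' 0))‖ := by congr 1; abel
    _ ≤ Cφ * ‖min s 0 - min s' 0‖ + Cx * ‖max s 0 - max s' 0‖ :=
        norm_add_le_of_le (hφ _ (hmin s hs) _ (hmin s' hs')) (hx _ (hmax s hs) _ (hmax s' hs'))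
    _ ≤ (Cφ + Cx) * ‖s - s'‖ := by rw [add_mul]; gcongr

theorem norm_extendByHistory_shift_sub_le {φ : ℝ → E} {X : ℝ → ℝ → E}
    {b T σ σ' t Cφ CX CW : ℝ} (hCφ : 0 ≤ Cφ) (hCX : 0 ≤ CX) (hCW : 0 ≤ CW)
    (hσ : σ ∈ Icc 0 b) (hσ' : σ' ∈ Icc 0 b) (ht : t ∈ Icc 0 T)
    (hφ : ∀ s ∈ Icc (-b) 0, ∀ s' ∈ Icc (-b) 0, ‖φ s - φ s'‖ ≤ Cφ * ‖s - s'‖)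
    (hX : ∀ s ∈ Icc 0 T, ∀ s' ∈ Icc 0 T, ‖X σ s - X σ s'‖ ≤ CX * ‖s - s'‖)
    (hXσ : ∀ u ∈ Icc 0 T, ‖X σ' u - X σ u‖ ≤ CW * ‖σ' - σ‖) (h0 : φ 0 = X σ 0) :
    ‖extendByHistory φ (X σ') (t - σ') - extendByHistory φ (X σ) (t - σ)‖
      ≤ (CW + (Cφ + CX)) * ‖σ' - σ‖ := by
  have hparam : ‖extendByHistory φ (X σ') (t - σ') - extendByHistory φ (X σ) (t - σ')‖
      ≤ CW * ‖σ' - σ‖ := by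
    unfold extendByHistory
    split_ifs with h
    · simpa using mul_nonneg hCW (norm_nonneg (σ' - σ))
    · exact hXσ _ ⟨(not_le.1 h).le, by linarith [ht.2, hσ'.1]⟩
  have hshift : ‖extendByHistory φ (X σ) (t - σ') - extendByHistory φ (X σ) (t - σ)‖
      ≤ (Cφ + CX) * ‖σ' - σ‖ := by
    have := norm_extendByHistory_sub_le (by linarith [hσ.1, hσ.2]) (ht.1.trans ht.2) hCφ hCX
      hφ hX h0 (s := t - σ') (s' := t - σ) ⟨by linarith [ht.1, hσ'.2], by linarith [ht.2, hσ'.1]⟩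
      ⟨by linarith [ht.1, hσ.2], by linarith [ht.2, hσ.1]⟩
    rwa [show t - σ' - (t - σ) = -(σ' - σ) by ring, norm_neg] at this
  calc _ ≤ _ := norm_sub_le_norm_sub_add_norm_sub _ (extendByHistory φ (X σ) (t - σ')) _
    _ ≤ _ := by rw [add_mul]; exact add_le_add hparam hshift

theorem aestronglyMeasurable_extendByHistory_comp_sub {f g : ℝ → E} {b T σ : ℝ}
    (hf : ContinuousOn f (Icc (-b) 0)) (hg : ContinuousOn g (Icc 0 T)) (hσ : σ ∈ Icc 0 b) :
    AEStronglyMeasurable (fun t => extendByHistory f g (t - σ)) (volume.restrict (Ioo 0 T)) := by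
  classical
  have hpiece : (fun t => extendByHistory f g (t - σ))
      = (Iic σ).piecewise (fun t => f (t - σ)) (fun t => g (t - σ)) := by
    funext t
    simp [Set.piecewise, extendByHistory]
  rw [hpiece]
  refine AEStronglyMeasurable.piecewise measurableSet_Iic ?_ ?_
  · rw [Measure.restrict_restrict measurableSet_Iic]
    refine (hf.comp (continuous_sub_right σ).continuousOn fun t ht => ?_).aestronglyMeasurable
      (measurableSet_Iic.inter measurableSet_Ioo)
    exact ⟨by linarith [ht.2.1, hσ.2], by linarith [mem_Iic.1 ht.1]⟩
  · rw [Measure.restrict_restrict measurableSet_Iic.compl, compl_Iic]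
    refine (hg.comp (continuous_sub_right σ).continuousOn fun t ht => ?_).aestronglyMeasurable
      (measurableSet_Ioi.inter measurableSet_Ioo)
    exact ⟨by linarith [mem_Ioi.1 ht.1], by linarith [ht.2.2, hσ.1]⟩

theorem tendsto_slope_extendByHistory_shift [NormedSpace ℝ E] {b T τ t : ℝ} {φ φ' : ℝ → E}
    {X Xt W : ℝ → ℝ → E} (hτ : τ ∈ Icc 0 b) (ht : t ∈ Ioo 0 T) (htτ : t ≠ τ)
    (hφ' : ∀ s ∈ Icc (-b) 0, HasDerivAt φ (φ' s) s)
    (hXt : ∀ s ∈ Icc 0 T, HasDerivAt (X τ) (Xt τ s) s)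
    (hW : ∀ σ ∈ Icc 0 b, ∀ s ∈ Icc 0 T, HasDerivWithinAt (fun ρ => X ρ s) (W σ s) (Icc 0 b) σ)
    (hWc : ContinuousOn (fun p : ℝ × ℝ => W p.1 p.2) (Icc 0 b ×ˢ Icc 0 T)) :
    Tendsto (fun δ : ℝ => δ⁻¹ •
        (extendByHistory φ (X (τ + δ)) (t - τ - δ) - extendByHistory φ (X τ) (t - τ)))
      (𝓝[{δ | τ + δ ∈ Icc 0 b} \ {0}] 0) (𝓝 (extendByHistory (-φ') (W τ - Xt τ) (t - τ))) := by
  rcases lt_or_gt_of_ne htτ with hlt | hgt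
  · have hs : t - τ < 0 := sub_neg.2 hlt
    simp only [extendByHistory_of_nonpos hs.le, Pi.neg_apply]
    refine ((hφ' _ ⟨by linarith [ht.1, hτ.2], hs.le⟩).tendsto_backward_slope_zero.mono_left
      (nhdsWithin_mono 0 (sdiff_subset_compl _ {0}))).congr' ?_
    filter_upwards [nhdsWithin_le_nhds (eventually_gt_nhds hs)] with δ hδ
    rw [extendByHistory_of_nonpos (by linarith)]
  · have hs : 0 < t - τ := sub_pos.2 hgt
    have hsT : t - τ < T := by linarith [ht.2, hτ.1]
    simp only [extendByHistory_of_pos hs, Pi.sub_apply]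
    refine (tendsto_slope_shift_of_continuousWithinAt (convex_Icc 0 b) hW hτ
      (Icc_mem_nhds hs hsT) (hWc _ ⟨hτ, hs.le, hsT.le⟩) (hXt _ ⟨hs.le, hsT.le⟩)).congr' ?_
    filter_upwards [nhdsWithin_le_nhds (eventually_lt_nhds hs)] with δ hδ
    rw [extendByHistory_of_pos (by linarith)]

theorem exists_norm_slope_extendByHistory_shift_sub_le [NormedSpace ℝ E] {b T τ : ℝ}
    {φ φ' : ℝ → E} {X Xt W : ℝ → ℝ → E} (hτ : τ ∈ Icc 0 b)
    (hφ' : ∀ s ∈ Icc (-b) 0, HasDerivAt φ (φ' s) s) (hφ'c : ContinuousOn φ' (Icc (-b) 0))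
    (hX0 : φ 0 = X τ 0) (hXt : ∀ s ∈ Icc 0 T, HasDerivAt (X τ) (Xt τ s) s)
    (hXtc : ContinuousOn (Xt τ) (Icc 0 T))
    (hW : ∀ σ ∈ Icc 0 b, ∀ s ∈ Icc 0 T, HasDerivWithinAt (fun ρ => X ρ s) (W σ s) (Icc 0 b) σ)
    (hWc : ContinuousOn (fun p : ℝ × ℝ => W p.1 p.2) (Icc 0 b ×ˢ Icc 0 T)) :
    ∃ C, ∀ δ ≠ 0, τ + δ ∈ Icc 0 b → ∀ t ∈ Icc 0 T,
      ‖δ⁻¹ • (extendByHistory φ (X (τ + δ)) (t - τ - δ) - extendByHistory φ (X τ) (t - τ))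
        - extendByHistory (-φ') (W τ - Xt τ) (t - τ)‖ ≤ C := by
  obtain ⟨Mφ, hMφ⟩ := isCompact_Icc.exists_bound_of_continuousOn hφ'c
  obtain ⟨MX, hMX⟩ := isCompact_Icc.exists_bound_of_continuousOn hXtc
  obtain ⟨MW, hMW⟩ := (isCompact_Icc.prod isCompact_Icc).exists_bound_of_continuousOn hWc
  refine ⟨(MW + (Mφ + MX)) + (Mφ + (MW + MX)), fun δ hδ hτδ t ht => ?_⟩
  have hMφ0 : 0 ≤ Mφ := (norm_nonneg _).trans (hMφ 0 ⟨by linarith [hτ.1, hτ.2], le_rfl⟩)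
  have hMX0 : 0 ≤ MX := (norm_nonneg _).trans (hMX t ht)
  have hMW0 : 0 ≤ MW := (norm_nonneg _).trans (hMW (τ, t) ⟨hτ, ht⟩)
  have hquot : ‖δ⁻¹ • (extendByHistory φ (X (τ + δ)) (t - τ - δ)
      - extendByHistory φ (X τ) (t - τ))‖ ≤ MW + (Mφ + MX) := by
    have h := norm_extendByHistory_shift_sub_le hMφ0 hMX0 hMW0 hτ hτδ ht
      (fun s hs s' hs' => (convex_Icc _ _).norm_image_sub_le_of_norm_hasDerivWithin_le
        (fun r hr => (hφ' r hr).hasDerivWithinAt) hMφ hs' hs)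
      (fun s hs s' hs' => (convex_Icc _ _).norm_image_sub_le_of_norm_hasDerivWithin_le
        (fun r hr => (hXt r hr).hasDerivWithinAt) hMX hs' hs)
      (fun u hu => (convex_Icc 0 b).norm_image_sub_le_of_norm_hasDerivWithin_le
        (f := fun ρ => X ρ u) (fun ρ hρ => hW ρ hρ u hu) (fun ρ hρ => hMW (ρ, u) ⟨hρ, hu⟩)
        hτ hτδ) hX0
    rw [add_sub_cancel_left, ← sub_sub] at h
    rw [norm_smul, norm_inv]
    calc ‖δ‖⁻¹ * _ ≤ ‖δ‖⁻¹ * ((MW + (Mφ + MX)) * ‖δ‖) := by gcongr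
      _ = _ := by field_simp [norm_ne_zero_iff.2 hδ]
  have hlim : ‖extendByHistory (-φ') (W τ - Xt τ) (t - τ)‖ ≤ Mφ + (MW + MX) := by
    unfold extendByHistory
    split_ifs with h
    · rw [Pi.neg_apply, norm_neg]
      exact (hMφ _ ⟨by linarith [ht.1, hτ.2], h⟩).trans (le_add_of_nonneg_right (by positivity))
    · have hs : t - τ ∈ Icc 0 T := ⟨(not_le.1 h).le, by linarith [ht.2, hτ.1]⟩
      exact (norm_sub_le _ _).trans ((add_le_add (hMW (τ, t - τ) ⟨hτ, hs⟩) (hMX _ hs)).trans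
        (le_add_of_nonneg_left hMφ0))
  exact (norm_sub_le _ _).trans (add_le_add hquot hlim)

theorem aestronglyMeasurable_slope_extendByHistory_shift_sub [NormedSpace ℝ E] {b T τ δ : ℝ}
    {φ φ' : ℝ → E} {X Xt W : ℝ → ℝ → E} (hτ : τ ∈ Icc 0 b) (hτδ : τ + δ ∈ Icc 0 b)
    (hφ' : ∀ s ∈ Icc (-b) 0, HasDerivAt φ (φ' s) s) (hφ'c : ContinuousOn φ' (Icc (-b) 0))
    (hXt : ∀ σ ∈ Icc 0 b, ∀ s ∈ Icc 0 T, HasDerivAt (X σ) (Xt σ s) s)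
    (hXtc : ContinuousOn (Xt τ) (Icc 0 T))
    (hWc : ContinuousOn (fun p : ℝ × ℝ => W p.1 p.2) (Icc 0 b ×ˢ Icc 0 T)) :
    AEStronglyMeasurable (fun t =>
      δ⁻¹ • (extendByHistory φ (X (τ + δ)) (t - τ - δ) - extendByHistory φ (X τ) (t - τ))
        - extendByHistory (-φ') (W τ - Xt τ) (t - τ)) (volume.restrict (Ioo 0 T)) := by
  have hφc : ContinuousOn φ (Icc (-b) 0) := fun s hs => (hφ' s hs).continuousAt.continuousWithinAt
  have hXc : ∀ σ ∈ Icc 0 b, ContinuousOn (X σ) (Icc 0 T) := fun σ hσ s hs =>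
    (hXt σ hσ s hs).continuousAt.continuousWithinAt
  have hWτc : ContinuousOn (W τ) (Icc 0 T) :=
    hWc.comp (continuous_const.prodMk continuous_id).continuousOn fun s hs => ⟨hτ, hs⟩
  simp only [sub_sub]
  exact (((aestronglyMeasurable_extendByHistory_comp_sub hφc (hXc _ hτδ) hτδ).sub
    (aestronglyMeasurable_extendByHistory_comp_sub hφc (hXc _ hτ) hτ)).const_smul δ⁻¹).sub
    (aestronglyMeasurable_extendByHistory_comp_sub hφ'c.neg (hWτc.sub hXtc) hτ)

end ExtendByHistory

theorem piecewise_differentiation_general (n : ℕ) (b T : ℝ)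
    (τ : ℝ) (hτb : τ ∈ Icc (0:ℝ) b)
    (φ φ' : ℝ → EuclideanSpace ℝ (Fin n))
    (hφ' : ∀ t ∈ Icc (-b) (0:ℝ), HasDerivAt φ (φ' t) t)
    (hφ'c : ContinuousOn φ' (Icc (-b) 0))
    (X Xt W : ℝ → ℝ → EuclideanSpace ℝ (Fin n))
    (hX0 : ∀ σ ∈ Icc (0:ℝ) b, X σ 0 = φ 0)
    (hXt : ∀ σ ∈ Icc (0:ℝ) b, ∀ t ∈ Icc (0:ℝ) T, HasDerivAt (X σ) (Xt σ t) t)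
    (hXtc : ∀ σ ∈ Icc (0:ℝ) b, ContinuousOn (Xt σ) (Icc 0 T))
    -- τ ↦ x'[τ] continuous with values in H¹(0,T) ⊂ C([0,T]); pointwise version:
    (hW : ∀ σ ∈ Icc (0:ℝ) b, ∀ t ∈ Icc (0:ℝ) T,
      HasDerivWithinAt (fun ρ => X ρ t) (W σ t) (Icc 0 b) σ)
    (hWc : ContinuousOn (fun p : ℝ × ℝ => W p.1 p.2) (Icc 0 b ×ˢ Icc 0 T)) :
    Tendsto (fun δ : ℝ =>
        (eLpNorm (fun t =>
            δ⁻¹ • ((if t ≤ τ + δ then φ (t - τ - δ) else X (τ + δ) (t - τ - δ))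
              - (if t ≤ τ then φ (t - τ) else X τ (t - τ)))
            - (if t ≤ τ then -φ' (t - τ) else W τ (t - τ) - Xt τ (t - τ))) 2
          (volume.restrict (Ioo 0 T))).toReal)
      (nhdsWithin 0 {δ : ℝ | τ + δ ∈ Icc (0:ℝ) b ∧ τ + δ < T ∧ δ ≠ 0}) (nhds 0) := by
  obtain ⟨C, hC⟩ := exists_norm_slope_extendByHistory_shift_sub_le hτb hφ' hφ'c (hX0 τ hτb).symm
    (hXt τ hτb) (hXtc τ hτb) hW hWc
  have hL2 : Tendsto (fun δ : ℝ => eLpNorm (fun t =>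
      δ⁻¹ • (extendByHistory φ (X (τ + δ)) (t - τ - δ) - extendByHistory φ (X τ) (t - τ))
        - extendByHistory (-φ') (W τ - Xt τ) (t - τ)) 2 (volume.restrict (Ioo 0 T)))
      (𝓝[{δ : ℝ | τ + δ ∈ Icc (0:ℝ) b ∧ τ + δ < T ∧ δ ≠ 0}] 0) (𝓝 0) := by
    refine tendsto_eLpNorm_zero_of_tendsto_ae_of_norm_le (C := C) ENNReal.ofNat_ne_top ?_ ?_ ?_
    · filter_upwards [self_mem_nhdsWithin] with δ hδ
      exact aestronglyMeasurable_slope_extendByHistory_shift_sub hτb hδ.1 hφ' hφ'c hXt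
        (hXtc τ hτb) hWc
    · filter_upwards [self_mem_nhdsWithin] with δ hδ
      filter_upwards [ae_restrict_mem measurableSet_Ioo] with t ht
      exact hC δ hδ.2.2 hδ.1 t (Ioo_subset_Icc_self ht)
    · filter_upwards [ae_restrict_mem measurableSet_Ioo,
        ae_restrict_of_ae ((countable_singleton τ).ae_notMem volume)] with t ht htτ
      exact tendsto_sub_nhds_zero_iff.2 ((tendsto_slope_extendByHistory_shift hτb ht htτ hφ'
        (hXt τ hτb) hW hWc).mono_left (nhdsWithin_mono 0 fun δ hδ => ⟨hδ.1, hδ.2.2⟩))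
  simpa [Function.comp_def, extendByHistory, sub_sub] using
    (ENNReal.tendsto_toReal ENNReal.zero_ne_top).comp hL2

/-- Lemma piecewise*: with `ψ(σ,t) = φ(t-σ)` for `t ∈ [0,σ]` and
`ψ(σ,t) = x[σ](t-σ)` for `t ∈ (σ,T]`, the difference quotients
`(ψ(τ+δ,·) - ψ(τ,·))/δ` converge in `L²(0,T;ℝⁿ)` as `δ → 0` to the function equal to
`-φ̇(t-τ)` on `[0,τ]` and `x'[τ](t-τ) - ẋ[τ](t-τ)` on `(τ,T]`.
Here `X σ` is the solution family with time derivative `Xt σ` (continuous, i.e.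
`x[σ] ∈ H²`), `W σ` is the `τ`-derivative family `x'[σ]`, continuous in `(σ,t)`. -/
theorem piecewise_differentiation (n : ℕ) (b T : ℝ) (hb : 0 < b) (hT : 0 < T)
    (τ : ℝ) (hτ : τ ∈ Ioo (0:ℝ) T) (hτb : τ ∈ Icc (0:ℝ) b)
    (φ φ' : ℝ → EuclideanSpace ℝ (Fin n))
    (hφ' : ∀ t ∈ Icc (-b) (0:ℝ), HasDerivAt φ (φ' t) t)
    (hφ'c : ContinuousOn φ' (Icc (-b) 0))
    (X Xt W : ℝ → ℝ → EuclideanSpace ℝ (Fin n))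
    (hX0 : ∀ σ ∈ Icc (0:ℝ) b, X σ 0 = φ 0)
    (hXt : ∀ σ ∈ Icc (0:ℝ) b, ∀ t ∈ Icc (0:ℝ) T, HasDerivAt (X σ) (Xt σ t) t)
    (hXtc : ∀ σ ∈ Icc (0:ℝ) b, ContinuousOn (Xt σ) (Icc 0 T))
    -- τ ↦ x'[τ] continuous with values in H¹(0,T) ⊂ C([0,T]); pointwise version:
    (hW : ∀ σ ∈ Icc (0:ℝ) b, ∀ t ∈ Icc (0:ℝ) T,
      HasDerivWithinAt (fun ρ => X ρ t) (W σ t) (Icc 0 b) σ)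
    (hWc : ContinuousOn (fun p : ℝ × ℝ => W p.1 p.2) (Icc 0 b ×ˢ Icc 0 T)) :
    Tendsto (fun δ : ℝ =>
        (eLpNorm (fun t =>
            δ⁻¹ • ((if t ≤ τ + δ then φ (t - τ - δ) else X (τ + δ) (t - τ - δ))
              - (if t ≤ τ then φ (t - τ) else X τ (t - τ)))
            - (if t ≤ τ then -φ' (t - τ) else W τ (t - τ) - Xt τ (t - τ))) 2
          (volume.restrict (Ioo 0 T))).toReal)
      (nhdsWithin 0 {δ : ℝ | τ + δ ∈ Icc (0:ℝ) b ∧ τ + δ < T ∧ δ ≠ 0}) (nhds 0) :=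
  piecewise_differentiation_general n b T τ hτb φ φ' hφ' hφ'c X Xt W hX0 hXt hXtc hW hWc
end

section
/- For the scalar equation ẋ(t) = x(t-τ), x ≡ 1 on [-1,0], with cost j(τ) = ½∫₀¹(x[τ](t) - x_d(t))² dt and x_d(t) = eᵗ + 1: at τ = 0 the state is x[0](t) = eᵗ, the linearized state solves ẇ = w - eᵗ, w(0) = 0, giving x'[0](t) = -t eᵗ, and j'(0) = ∫₀¹(eᵗ - (1+eᵗ))(-t eᵗ) dt = ∫₀¹ t eᵗ dt = 1 > 0; hence τ = 0 is a strict local minimizer of j on [0,1]. -/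
/-!
At `τ = 0` the delay equation is the ODE `ẋ = x`, so `x[0] = exp`, and the linearized equation
`ẇ = w - exp`, `w(0) = 0` is solved by `-t eᵗ`; both are identified by uniqueness for linear
first-order equations. Then `j'(0) = ∫₀¹ t eᵗ dt = 1 > 0`, and a positive one-sided derivative
at the left endpoint forces `j 0 < j τ` for small `τ > 0`.
-/

open Set MeasureTheory Real Topology

theorem eq_left_of_hasDerivAt_zero {f : ℝ → ℝ} {a b : ℝ} (hf : ContinuousOn f (Icc a b))
    (hf' : ∀ t ∈ Ioo a b, HasDerivAt f 0 t) : ∀ t ∈ Icc a b, f t = f a := by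
  rintro t ⟨hat, htb⟩
  rcases hat.eq_or_lt with rfl | hat
  · rfl
  obtain ⟨c, -, hc⟩ := exists_hasDerivAt_eq_slope f (fun _ ↦ 0) hat
    (hf.mono (Icc_subset_Icc le_rfl htb)) fun c hc ↦ hf' c ⟨hc.1, hc.2.trans_le htb⟩
  rw [eq_comm, div_eq_zero_iff, sub_eq_zero, sub_eq_zero] at hc
  exact hc.resolve_right hat.ne'

theorem eqOn_Icc_of_hasDerivAt_linear {a b k : ℝ} {g y z : ℝ → ℝ}
    (hy : ContinuousOn y (Icc a b)) (hz : ContinuousOn z (Icc a b))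
    (hy' : ∀ t ∈ Ioo a b, HasDerivAt y (k * y t + g t) t)
    (hz' : ∀ t ∈ Ioo a b, HasDerivAt z (k * z t + g t) t) (hyz : y a = z a) :
    EqOn y z (Icc a b) := by
  -- the integrating factor `exp (-k t)` turns the difference of two solutions into a constant
  set u : ℝ → ℝ := fun t ↦ (y t - z t) * exp (-(k * t))
  have hu : ContinuousOn u (Icc a b) := (hy.sub hz).mul (by fun_prop)
  have hu' : ∀ t ∈ Ioo a b, HasDerivAt u 0 t := by
    intro t ht
    have he : HasDerivAt (fun t ↦ exp (-(k * t))) (exp (-(k * t)) * -k) t := by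
      simpa using ((hasDerivAt_id t).const_mul k).neg.exp
    exact (((hy' t ht).sub (hz' t ht)).mul he).congr_deriv (by simp only [Pi.sub_apply]; ring)
  intro t ht
  have hut : (y t - z t) * exp (-(k * t)) = 0 := by
    simpa [u, hyz] using eq_left_of_hasDerivAt_zero hu hu' t ht
  simpa [sub_eq_zero, exp_ne_zero] using hut

theorem integral_mul_exp (a b : ℝ) :
    ∫ t in a..b, t * exp t = (b - 1) * exp b - (a - 1) * exp a := by
  refine intervalIntegral.integral_eq_sub_of_hasDerivAt (f := fun t ↦ (t - 1) * exp t)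
    (fun t _ ↦ ?_)
    ((by fun_prop : Continuous fun t ↦ t * exp t).intervalIntegrable _ _)
  exact (((hasDerivAt_id t).sub_const 1).mul (hasDerivAt_exp t)).congr_deriv
    (by simp only [id_eq]; ring)

theorem HasDerivWithinAt.eventually_lt_of_pos {f : ℝ → ℝ} {f' a : ℝ} {s : Set ℝ}
    (hf : HasDerivWithinAt f f' s a) (hf' : 0 < f') : ∀ᶠ x in 𝓝[s ∩ Ioi a] a, f a < f x := by
  have hslope : ∀ᶠ x in 𝓝[s ∩ Ioi a] a, 0 < slope f a x :=
    nhdsWithin_mono a (fun x hx ↦ ⟨hx.1, hx.2.ne'⟩ : s ∩ Ioi a ⊆ s \ {a})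
      (hasDerivWithinAt_iff_tendsto_slope.1 hf (Ioi_mem_nhds hf'))
  filter_upwards [hslope, self_mem_nhdsWithin] with x hx hax
  rw [slope_def_field] at hx
  exact sub_pos.1 ((div_pos_iff_of_pos_right (sub_pos.2 hax.2)).1 hx)

theorem example_tau_zero_minimizer_general
    (X : ℝ → ℝ → ℝ)
    (hX : ∀ τ ∈ Icc (0:ℝ) 1, ContinuousOn (X τ) (Icc (-1) 1) ∧
      (∀ t ∈ Icc (-1:ℝ) 0, X τ t = 1) ∧
      (∀ t ∈ Ioo (0:ℝ) 1, HasDerivAt (X τ) (X τ (t - τ)) t))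
    -- the linearized state at τ = 0 : ẇ(t) = w(t) - ẋ[0](t) = w(t) - x[0](t), w(0)=0
    (W0 : ℝ → ℝ)
    (hW0c : ContinuousOn W0 (Icc 0 1)) (hW00 : W0 0 = 0)
    (hW0 : ∀ t ∈ Ioo (0:ℝ) 1, HasDerivAt W0 (W0 t - X 0 t) t)
    (j j' : ℝ → ℝ)
    (hj' : ∀ τ ∈ Icc (0:ℝ) 1, HasDerivWithinAt j (j' τ) (Icc 0 1) τ)
    (hj'form : j' 0 = ∫ t in Ioo (0:ℝ) 1, (X 0 t - (Real.exp t + 1)) * W0 t) :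
    (∀ t ∈ Icc (0:ℝ) 1, X 0 t = Real.exp t) ∧
    (∀ t ∈ Icc (0:ℝ) 1, W0 t = -t * Real.exp t) ∧
    j' 0 = 1 ∧ 0 < j' 0 ∧
    (∃ ε > (0:ℝ), ∀ τ ∈ Icc (0:ℝ) 1, τ ≠ 0 → |τ| < ε → j 0 < j τ) := by
  obtain ⟨hXc, hXinit, hXd⟩ := hX 0 ⟨le_rfl, zero_le_one⟩
  have hstate : EqOn (X 0) exp (Icc 0 1) :=
    eqOn_Icc_of_hasDerivAt_linear (k := 1) (g := 0)
      (hXc.mono (Icc_subset_Icc (by norm_num) le_rfl)) continuous_exp.continuousOn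
      (fun t ht ↦ by simpa using hXd t ht) (fun t _ ↦ by simpa using hasDerivAt_exp t)
      (by simpa using hXinit 0 ⟨by norm_num, le_rfl⟩)
  have hlin : EqOn W0 (fun t ↦ -t * exp t) (Icc 0 1) := by
    refine eqOn_Icc_of_hasDerivAt_linear (k := 1) (g := fun t ↦ -exp t) hW0c (by fun_prop)
      (fun t ht ↦ ?_) (fun t _ ↦ ?_) (by simp [hW00])
    · rw [← hstate (Ioo_subset_Icc_self ht)]
      exact (hW0 t ht).congr_deriv (by ring)
    · exact ((hasDerivAt_id t).neg.mul (hasDerivAt_exp t)).congr_deriv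
        (by simp only [Pi.neg_apply, id_eq]; ring)
  have hj'0 : j' 0 = 1 := by
    have hintegrand : EqOn (fun t ↦ (X 0 t - (exp t + 1)) * W0 t) (fun t ↦ t * exp t) (Ioo 0 1) :=
      fun t ht ↦ by
        simp only [hstate (Ioo_subset_Icc_self ht), hlin (Ioo_subset_Icc_self ht)]
        ring
    rw [hj'form, setIntegral_congr_fun measurableSet_Ioo hintegrand, ← integral_Ioc_eq_integral_Ioo,
      ← intervalIntegral.integral_of_le zero_le_one, integral_mul_exp]
    simp
  have hj'0_pos : 0 < j' 0 := hj'0 ▸ one_pos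
  refine ⟨hstate, hlin, hj'0, hj'0_pos, ?_⟩
  obtain ⟨ε, hε, hmin⟩ := Metric.mem_nhdsWithin_iff.1
    ((hj' 0 ⟨le_rfl, zero_le_one⟩).eventually_lt_of_pos hj'0_pos)
  exact ⟨ε, hε, fun τ hτ hτ0 hτε ↦
    hmin ⟨by rwa [Metric.mem_ball, Real.dist_eq, sub_zero], hτ, hτ.1.lt_of_ne' hτ0⟩⟩

/-- for `ẋ(t) = x(t-τ)`, `x ≡ 1` on `[-1,0]`, `x_d(t) = eᵗ + 1`,
`j(τ) = ½∫₀¹(x[τ]-x_d)²`: at `τ = 0` one has `x[0](t) = eᵗ`, the linearized state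
`x'[0]` solves `ẇ = w - eᵗ`, `w(0) = 0`, giving `x'[0](t) = -t eᵗ`, and
`j'(0) = ∫₀¹ t eᵗ dt = 1 > 0`; hence `τ = 0` is a strict local minimizer of `j` on `[0,1]`. -/
theorem example_tau_zero_minimizer
    (X : ℝ → ℝ → ℝ)
    (hX : ∀ τ ∈ Icc (0:ℝ) 1, ContinuousOn (X τ) (Icc (-1) 1) ∧
      (∀ t ∈ Icc (-1:ℝ) 0, X τ t = 1) ∧
      (∀ t ∈ Ioo (0:ℝ) 1, HasDerivAt (X τ) (X τ (t - τ)) t))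
    -- the linearized state at τ = 0 : ẇ(t) = w(t) - ẋ[0](t) = w(t) - x[0](t), w(0)=0
    (W0 : ℝ → ℝ)
    (hW0c : ContinuousOn W0 (Icc 0 1)) (hW00 : W0 0 = 0)
    (hW0 : ∀ t ∈ Ioo (0:ℝ) 1, HasDerivAt W0 (W0 t - X 0 t) t)
    (j j' : ℝ → ℝ)
    (hj : ∀ τ, j τ = (1/2) * ∫ t in Ioo (0:ℝ) 1, (X τ t - (Real.exp t + 1))^2)
    (hj' : ∀ τ ∈ Icc (0:ℝ) 1, HasDerivWithinAt j (j' τ) (Icc 0 1) τ)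
    (hj'c : ContinuousOn j' (Icc 0 1))
    (hj'form : j' 0 = ∫ t in Ioo (0:ℝ) 1, (X 0 t - (Real.exp t + 1)) * W0 t) :
    (∀ t ∈ Icc (0:ℝ) 1, X 0 t = Real.exp t) ∧
    (∀ t ∈ Icc (0:ℝ) 1, W0 t = -t * Real.exp t) ∧
    j' 0 = 1 ∧ 0 < j' 0 ∧
    (∃ ε > (0:ℝ), ∀ τ ∈ Icc (0:ℝ) 1, τ ≠ 0 → |τ| < ε → j 0 < j τ) :=
  example_tau_zero_minimizer_general X hX W0 hW0c hW00 hW0 j j' hj' hj'form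
end
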